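/- arXiv:0905.3876 — 5 statements merged into one kernel-verified Lean document; each statement's English description precedes it below -/
import Mathlib

section
/- Let a ∈ ℝ, ρ ∈ {1,−1}, and let γ₀ be a function from ℂ∖{0} to SL₂(ℂ) satisfying C(γ₀)(λ)·γ₀(λ)⁻¹ = ρ·[[a, λ],[−1/λ, 0]] for all λ ≠ 0. Let ε ∈ ℂ with |ε| = 1 and let τ ∈ ℂ be purely imaginary with e^τ = ε². Define δ(λ) = γ₀(ελ)⁻¹·d(ε)⁻¹·[[1,0],[τ/λ,1]]·γ₀(λ)·d(ε) for λ ≠ 0, where d(ε) = diag(1,ε). Then C(δ)(λ) = δ(λ) for all λ ≠ 0. -/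
/-!
Write `C(γ)(λ) = J(γ(1/λ̄))` with `J(A) = D A⁻ᴴ D`; since `D² = 1`, `J` is multiplicative and
commutes with inversion, so `C(δ)(λ)` is the product of `J` applied to the five factors of
`δ(1/λ̄)`. As `|ε| = 1` we have `ε/λ̄ = 1/conj(ελ)`, so the hypothesis on `γ₀` evaluates the outer
factors as `ρB(ελ)γ₀(ελ)` and `ρB(λ)γ₀(λ)`, where `B(μ) = [[a, μ], [-1/μ, 0]]`; `J` fixes `d(ε)`,
and `τ̄ = -τ` turns the unipotent factor into `[[1, -τλ], [0, 1]]`. What is left is the `2 × 2`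
identity `(ρB(ελ))⁻¹ d(ε)⁻¹ [[1, -τλ], [0, 1]] ρB(λ) = d(ε)⁻¹ [[1, 0], [τ/λ, 1]]`.
-/

open Matrix Complex

noncomputable section

abbrev M2 := Matrix (Fin 2) (Fin 2) ℂ

/-- `D = diag(1,-1)`. -/
def Dmat : M2 := !![1, 0; 0, -1]

/-- `d(ε) = diag(1,ε)`. -/
def dmat (ε : ℂ) : M2 := !![1, 0; 0, ε]

/-- The involution `C(γ)(λ) = D·((conj(γ(1/conj λ)))ᵀ)⁻¹·D`. -/
def Cinv (γ : ℂ → M2) (l : ℂ) : M2 :=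
  Dmat * (((γ (1 / (starRingEnd ℂ l))).map (starRingEnd ℂ))ᵀ)⁻¹ * Dmat

open ComplexConjugate

section TwistedStarInv

variable {n R : Type*} [Fintype n] [DecidableEq n] [CommRing R] [StarRing R]

def Matrix.twistedStarInv (D A : Matrix n n R) : Matrix n n R := D * Aᴴ⁻¹ * D

variable {D : Matrix n n R}

theorem Matrix.twistedStarInv_mul (hD : D * D = 1) (A B : Matrix n n R) :
    twistedStarInv D (A * B) = twistedStarInv D A * twistedStarInv D B := by
  simp only [twistedStarInv, conjTranspose_mul, Matrix.mul_inv_rev, mul_assoc]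
  rw [← mul_assoc D D, hD, one_mul]

theorem Matrix.twistedStarInv_inv (hD : D * D = 1) (A : Matrix n n R) :
    twistedStarInv D A⁻¹ = (twistedStarInv D A)⁻¹ := by
  have hDinv : D⁻¹ = D := inv_eq_right_inv hD
  simp only [twistedStarInv, conjTranspose_nonsing_inv, Matrix.mul_inv_rev, hDinv, mul_assoc]

end TwistedStarInv

theorem Dmat_mul_self : Dmat * Dmat = 1 := by
  simp [Dmat, one_fin_two]

theorem Cinv_apply (γ : ℂ → M2) (l : ℂ) :
    Cinv γ l = twistedStarInv Dmat (γ (1 / conj l)) := by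
  rw [Cinv, twistedStarInv, conjTranspose, transpose_map]
  rfl

theorem dmat_inv {x : ℂ} (hx : x ≠ 0) : (dmat x)⁻¹ = dmat x⁻¹ :=
  inv_eq_right_inv (by simp [dmat, one_fin_two, hx])

theorem twistedStarInv_dmat {x : ℂ} (hx : x ≠ 0) :
    twistedStarInv Dmat (dmat x) = dmat (conj x)⁻¹ := by
  have hdiag : (dmat x)ᴴ = dmat (conj x) := by
    ext i j; fin_cases i <;> fin_cases j <;> simp [dmat]
  rw [twistedStarInv, hdiag, dmat_inv (by simpa using hx)]
  simp [Dmat, dmat]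

theorem twistedStarInv_lowerUnitri (c : ℂ) :
    twistedStarInv Dmat !![1, 0; c, 1] = !![1, conj c; 0, 1] := by
  have hinv : (!![1, conj c; 0, 1] : M2)⁻¹ = !![1, -conj c; 0, 1] :=
    inv_eq_right_inv (by simp [one_fin_two])
  have hct : (!![1, 0; c, 1] : M2)ᴴ = !![1, conj c; 0, 1] := by
    ext i j; fin_cases i <;> fin_cases j <;> simp
  rw [twistedStarInv, hct, hinv]
  simp [Dmat]

theorem inv_smul_antitriangular (r a μ : ℂ) (hr : r ≠ 0) (hμ : μ ≠ 0) :
    (r • !![a, μ; -1 / μ, 0])⁻¹ = r⁻¹ • !![0, -μ; 1 / μ, a] :=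
  inv_eq_left_inv (by ext i j; fin_cases i <;> fin_cases j <;> simp <;> field_simp; ring)

theorem inv_smul_antitriangular_mul_upperUnitri (r a τ ε μ : ℂ) (hr : r ≠ 0) (hε : ε ≠ 0)
    (hμ : μ ≠ 0) :
    (r • !![a, ε * μ; -1 / (ε * μ), 0])⁻¹ * (dmat ε)⁻¹ * !![1, -(τ * μ); 0, 1]
        * (r • !![a, μ; -1 / μ, 0]) = (dmat ε)⁻¹ * !![1, 0; τ / μ, 1] := by
  rw [inv_smul_antitriangular r a _ hr (mul_ne_zero hε hμ), dmat_inv hε]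
  ext i j; fin_cases i <;> fin_cases j <;> simp [dmat] <;> field_simp
  ring

theorem delta_is_C_real_general (a ρ : ℝ) (hρ : ρ = 1 ∨ ρ = -1)
    (γ0 : ℂ → M2) (hdet : ∀ lam : ℂ, lam ≠ 0 → (γ0 lam).det = 1)
    (hγ0 : ∀ lam : ℂ, lam ≠ 0 →
      Cinv γ0 lam * (γ0 lam)⁻¹ = (ρ : ℂ) • !![(a : ℂ), lam; -1/lam, 0])
    (ε : ℂ) (hε : ‖ε‖ = 1) (τ : ℂ) (hτ : τ.re = 0) :
    ∀ lam : ℂ, lam ≠ 0 →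
      Cinv (fun l => (γ0 (ε * l))⁻¹ * (dmat ε)⁻¹ * !![1, 0; τ/l, 1] * γ0 l * dmat ε) lam
        = (γ0 (ε * lam))⁻¹ * (dmat ε)⁻¹ * !![1, 0; τ/lam, 1] * γ0 lam * dmat ε := by
  intro lam hlam
  have hε0 : ε ≠ 0 := norm_ne_zero_iff.mp (by simp [hε])
  have hρ0 : (ρ : ℂ) ≠ 0 := by rcases hρ with rfl | rfl <;> norm_num
  have hCγ0 : ∀ μ : ℂ, μ ≠ 0 →
      twistedStarInv Dmat (γ0 (1 / conj μ)) = ((ρ : ℂ) • !![(a : ℂ), μ; -1/μ, 0]) * γ0 μ := by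
    intro μ hμ
    rw [← hγ0 μ hμ, Cinv_apply, nonsing_inv_mul_cancel_right (A := γ0 μ) _ (by simp [hdet μ hμ])]
  have hshift : ε * (1 / conj lam) = 1 / conj (ε * lam) := by
    rw [map_mul, ← inv_eq_conj hε]
    field_simp
  have hτ_conj : conj τ = -τ := Complex.ext (by simp [hτ]) (by simp)
  have hU : twistedStarInv Dmat !![1, 0; τ / (1 / conj lam), 1] = !![1, -(τ * lam); 0, 1] := by
    rw [twistedStarInv_lowerUnitri, one_div, div_inv_eq_mul, map_mul, conj_conj, hτ_conj,
      neg_mul]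
  rw [Cinv_apply]
  simp only [twistedStarInv_mul Dmat_mul_self, twistedStarInv_inv Dmat_mul_self, hshift,
    hCγ0 _ hlam, hCγ0 _ (mul_ne_zero hε0 hlam), twistedStarInv_dmat hε0, ← inv_eq_conj hε,
    inv_inv, hU, Matrix.mul_inv_rev]
  simp only [mul_assoc]
  congr 1
  simp only [← mul_assoc]
  rw [inv_smul_antitriangular_mul_upperUnitri _ (a : ℂ) τ ε lam hρ0 hε0 hlam]

theorem delta_is_C_real (a ρ : ℝ) (hρ : ρ = 1 ∨ ρ = -1)
    (γ0 : ℂ → M2) (hdet : ∀ lam : ℂ, lam ≠ 0 → (γ0 lam).det = 1)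
    (hγ0 : ∀ lam : ℂ, lam ≠ 0 →
      Cinv γ0 lam * (γ0 lam)⁻¹ = (ρ : ℂ) • !![(a : ℂ), lam; -1/lam, 0])
    (ε : ℂ) (hε : ‖ε‖ = 1) (τ : ℂ) (hτ : τ.re = 0)
    (hτε : Complex.exp τ = ε ^ 2) :
    ∀ lam : ℂ, lam ≠ 0 →
      Cinv (fun l => (γ0 (ε * l))⁻¹ * (dmat ε)⁻¹ * !![1, 0; τ/l, 1] * γ0 l * dmat ε) lam
        = (γ0 (ε * lam))⁻¹ * (dmat ε)⁻¹ * !![1, 0; τ/lam, 1] * γ0 lam * dmat ε :=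
  delta_is_C_real_general a ρ hρ γ0 hdet hγ0 ε hε τ hτ
end
end

section
/- Let M be a 2×2 complex matrix with det M = 1 such that [[1,−s],[0,1]]·M·[[1,0],[−s,1]] = M for every real number s, and such that D·(conj M)ᵀ·D = M, where D = diag(1,−1) and conj denotes entrywise complex conjugation. Then there exist a real number a and ρ ∈ {1,−1} such that M = ρ·[[a, 1],[−1, 0]]. -/
open Matrix Complex

noncomputable section

/-! Invariance under one nonzero shear already forces `M = !![a, e; -e, 0]`; then `det M = e²` and
the reality condition makes `a` and `e` real, so `e = ±1`. -/

open scoped ComplexConjugate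

theorem Matrix.exists_eq_of_shear_invariant {R : Type*} [CommRing R] [NoZeroDivisors R]
    {M : Matrix (Fin 2) (Fin 2) R} {s : R} (hs : s ≠ 0)
    (h : !![1, -s; 0, 1] * M * !![1, 0; -s, 1] = M) : ∃ a e : R, M = !![a, e; -e, 0] := by
  have entry (i j : Fin 2) := congrFun (congrFun h i) j
  simp only [mul_apply, Fin.sum_univ_two, of_apply, cons_val', cons_val_zero, cons_val_one,
    empty_val', cons_val_fin_one] at entry
  -- entries (0,1) and (0,0) of the left side: `m₀₁ - s m₁₁` and `m₀₀ - s (m₀₁ + m₁₀) + s² m₁₁`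
  have h11 : M 1 1 = 0 := by
    have := entry 0 1
    simp only [Fin.isValue, cons_val_one, cons_val_zero] at this
    exact (mul_eq_zero.mp (by linear_combination -this)).resolve_left hs
  have h10 : M 1 0 = -M 0 1 := by
    have := entry 0 0
    simp only [Fin.isValue, cons_val_zero, h11] at this
    exact eq_neg_of_add_eq_zero_left <|
      (mul_eq_zero.mp (by linear_combination -this)).resolve_left hs
  exact ⟨M 0 0, M 0 1, by ext i j; fin_cases i <;> fin_cases j <;> simp [h11, h10]⟩

theorem Dmat_mul_conj_transpose_mul_Dmat (a b c d : ℂ) :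
    Dmat * (!![a, b; c, d].map (starRingEnd ℂ))ᵀ * Dmat =
      !![conj a, -conj c; -conj b, conj d] := by
  ext i j
  fin_cases i <;> fin_cases j <;> simp [Dmat, mul_apply, vecMul, dotProduct, Fin.sum_univ_two]

theorem form_of_invariant_matrix (M : M2) (hdet : M.det = 1)
    (hinv : ∀ s : ℝ, !![1, -(s : ℂ); 0, 1] * M * !![1, 0; -(s : ℂ), 1] = M)
    (hreal : Dmat * (M.map (starRingEnd ℂ))ᵀ * Dmat = M) :
    ∃ (a ρ : ℝ), (ρ = 1 ∨ ρ = -1) ∧ M = (ρ : ℂ) • !![(a : ℂ), 1; -1, 0] := by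
  obtain ⟨a, e, rfl⟩ := exists_eq_of_shear_invariant (by simp) (hinv 1)
  rw [Dmat_mul_conj_transpose_mul_Dmat] at hreal
  obtain ⟨x, rfl⟩ := conj_eq_iff_real.mp (congrFun (congrFun hreal 0) 0)
  obtain ⟨r, rfl⟩ := conj_eq_iff_real.mp (by simpa using congrFun (congrFun hreal 0) 1)
  have hr : (r : ℂ) ^ 2 = 1 := by
    rw [det_fin_two_of] at hdet
    linear_combination hdet
  refine ⟨x * r, r, sq_eq_one_iff.mp (by exact_mod_cast hr), ?_⟩
  ext i j; fin_cases i <;> fin_cases j <;> simp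
  linear_combination -(x : ℂ) * hr
end
end

section
/- Let a > 0 be real, let z ∈ ℂ∖(−∞,0], set t = log z (principal branch), and define E(λ) = γ₀(λ)⁻¹·[[1,0],[t/λ,1]] for λ ≠ 0, where γ₀(λ) = [[1/√a, −λ/√a],[0, √a]]. Then C(E)(λ)⁻¹·E(λ) = [[a + t + conj(t), λ],[−1/λ, 0]] for every λ ≠ 0 (note a + t + conj(t) = a + log|z|² is real). -/
/-! Since `D² = 1`, for every `γ` with `γ(1/λ̄)` invertible the inverse of the involution is
`C(γ)(λ)⁻¹ = D · γ(1/λ̄)ᴴ · D`, with no inverse left. As `det γ₀ = 1`, `E` takes values in `SL₂(ℂ)`,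
so this applies to `E`, and the claim becomes a product of two explicit `2 × 2` matrices in which
the terms `t t̄ / a` cancel. -/

open Matrix Complex

noncomputable section

/-- `γ₀(λ) = [[1/√a, −λ/√a],[0,√a]]`. -/
def gamma0 (a : ℝ) (lam : ℂ) : M2 :=
  !![1 / (Real.sqrt a : ℂ), -lam / (Real.sqrt a : ℂ); 0, (Real.sqrt a : ℂ)]

/-- The slit `(−∞,0] ⊆ ℂ`. -/
def slit : Set ℂ := {z : ℂ | z.im = 0 ∧ z.re ≤ 0}

/-- `E(λ) = γ₀(λ)⁻¹ · [[1,0],[t/λ,1]]` where `t = log z`. -/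
def Emap (a : ℝ) (t : ℂ) (lam : ℂ) : M2 :=
  (gamma0 a lam)⁻¹ * !![1, 0; t / lam, 1]

theorem Matrix.inv_fin_two_of_det_eq_one {R : Type*} [CommRing R] {a b c d : R}
    (h : a * d - b * c = 1) : !![a, b; c, d]⁻¹ = !![d, -b; -c, a] := by
  rw [inv_def, det_fin_two_of, h, Ring.inverse_one, one_smul, adjugate_fin_two_of]

theorem Matrix.conjTranspose_fin_two_of {α : Type*} [Star α] (a b c d : α) :
    !![a, b; c, d]ᴴ = !![star a, star c; star b, star d] := by
  ext i j
  fin_cases i <;> fin_cases j <;> rfl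

theorem inv_Cinv (γ : ℂ → M2) (l : ℂ) (h : IsUnit (γ (1 / starRingEnd ℂ l)).det) :
    (Cinv γ l)⁻¹ = Dmat * (γ (1 / starRingEnd ℂ l))ᴴ * Dmat := by
  have hD : Dmat⁻¹ = Dmat := inv_eq_right_inv (by simp [Dmat, one_fin_two])
  have hH : IsUnit (γ (1 / starRingEnd ℂ l))ᴴ.det := by
    rw [det_conjTranspose]
    exact h.star
  change (Dmat * (γ (1 / starRingEnd ℂ l))ᴴ⁻¹ * Dmat)⁻¹ = _
  rw [Matrix.mul_inv_rev, Matrix.mul_inv_rev, hD, nonsing_inv_nonsing_inv _ hH, mul_assoc]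

theorem ofReal_sqrt_ne_zero {a : ℝ} (ha : 0 < a) : (√a : ℂ) ≠ 0 := by
  exact_mod_cast (Real.sqrt_pos.2 ha).ne'

theorem gamma0_inv {a : ℝ} (ha : 0 < a) (lam : ℂ) :
    (gamma0 a lam)⁻¹ = !![(√a : ℂ), lam / √a; 0, 1 / √a] := by
  have hs := ofReal_sqrt_ne_zero ha
  rw [gamma0, inv_fin_two_of_det_eq_one (by field_simp; ring)]
  simp [neg_div]

theorem det_Emap {a : ℝ} (ha : 0 < a) (t lam : ℂ) : (Emap a t lam).det = 1 := by
  have hs := ofReal_sqrt_ne_zero ha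
  rw [Emap, det_mul, gamma0_inv ha, det_fin_two_of, det_fin_two_of]
  simp
  field_simp

theorem Emap_eq {a : ℝ} (ha : 0 < a) (t : ℂ) {lam : ℂ} (hlam : lam ≠ 0) :
    Emap a t lam = !![√a + t / √a, lam / √a; t / (lam * √a), 1 / √a] := by
  have hs := ofReal_sqrt_ne_zero ha
  rw [Emap, gamma0_inv ha, mul_fin_two]
  ext i j
  fin_cases i <;> fin_cases j <;> simp <;> field_simp

theorem Cinv_Emap_inv_mul_Emap {a : ℝ} (ha : 0 < a) (t : ℂ) {lam : ℂ} (hlam : lam ≠ 0) :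
    (Cinv (Emap a t) lam)⁻¹ * Emap a t lam
      = !![(a : ℂ) + t + starRingEnd ℂ t, lam; -1 / lam, 0] := by
  have hs := ofReal_sqrt_ne_zero ha
  have hss : (√a : ℂ) * √a = a := by exact_mod_cast Real.mul_self_sqrt ha.le
  have hlam' : 1 / starRingEnd ℂ lam ≠ 0 := by simpa using hlam
  rw [inv_Cinv _ _ (by rw [det_Emap ha]; exact isUnit_one), Emap_eq ha t hlam', Emap_eq ha t hlam,
    conjTranspose_fin_two_of, Dmat, ← hss]
  ext i j
  fin_cases i <;> fin_cases j <;> simp <;> field_simp <;> ring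

theorem CE_inv_E_general (a : ℝ) (ha : 0 < a) (z : ℂ) :
    ∀ lam : ℂ, lam ≠ 0 →
      (Cinv (Emap a (Complex.log z)) lam)⁻¹ * Emap a (Complex.log z) lam
        = !![(a : ℂ) + Complex.log z + (starRingEnd ℂ) (Complex.log z), lam;
             -1/lam, 0] :=
  fun _ hlam => Cinv_Emap_inv_mul_Emap ha (Complex.log z) hlam

theorem CE_inv_E (a : ℝ) (ha : 0 < a) (z : ℂ) (hz : z ∉ slit) :
    ∀ lam : ℂ, lam ≠ 0 →
      (Cinv (Emap a (Complex.log z)) lam)⁻¹ * Emap a (Complex.log z) lam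
        = !![(a : ℂ) + Complex.log z + (starRingEnd ℂ) (Complex.log z), lam;
             -1/lam, 0] :=
  CE_inv_E_general a ha z
end
end

section
/- Fix λ ∈ ℂ, λ ≠ 0, and let f₀(z) = Σ_{i≥0} z^i/((i!)²·λ^{2i}) and f₁(z) = −(2/λ)·Σ_{i≥1} (1 + 1/2 + ⋯ + 1/i)·z^i/((i!)²·λ^{2i}) (both series converge for all z ∈ ℂ). Then for every z ∈ ℂ, f₀(z)·(f₀(z) + λ·z·f₁'(z)) − f₁(z)·λ·z·f₀'(z) = 1; that is, the matrix L₀(z,λ) with rows (f₀, λ·z·f₀') and (f₁, f₀ + λ·z·f₁') has determinant 1. -/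
open Matrix Complex

noncomputable section

/-- `f₀(z,λ) = Σ_{i≥0} z^i/((i!)²·λ^{2i})`. -/
def f0 (lam z : ℂ) : ℂ := ∑' i : ℕ, z ^ i / ((i.factorial : ℂ) ^ 2 * lam ^ (2 * i))

/-- harmonic number `1 + 1/2 + ⋯ + 1/i`. -/
def harm (i : ℕ) : ℂ := ∑ j ∈ Finset.range i, (1 : ℂ) / (j + 1)

/-- `f₁(z,λ) = −(2/λ)·Σ_{i≥1} (1+⋯+1/i)·z^i/((i!)²·λ^{2i})`. -/
def f1 (lam z : ℂ) : ℂ :=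
  -(2 / lam) * ∑' i : ℕ, harm i * z ^ i / ((i.factorial : ℂ) ^ 2 * lam ^ (2 * i))

/-- `L₀(z,λ)`, with rows `(f₀, λ·z·f₀')` and `(f₁, f₀ + λ·z·f₁')`. -/
def L0 (lam z : ℂ) : M2 :=
  !![f0 lam z, lam * z * deriv (f0 lam) z;
     f1 lam z, f0 lam z + lam * z * deriv (f1 lam) z]

/-! Write `F = f₀` and `f₁ = -(2/λ) G` with `G = ∑ Hᵢ zⁱ / ((i!)² λ²ⁱ)`, `Hᵢ` the harmonic
numbers. Both series are entire, and comparing coefficients (using `(z f)' = f + z f'` and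
`H_{i+1} = Hᵢ + 1/(i+1)`) gives `(z F')' = F/λ²` and `(z G')' = G/λ² + F'`. Hence
`F log z - 2G` is a second solution of `(z y')' = y/λ²`, and the determinant
`F² - 2z(F G' - G F')` is `z` times the Wronskian of the two solutions. Differentiating and
using both equations shows that it is constant, and at `z = 0` it equals `F(0)² = 1`. -/

def derivCoeff (c : ℕ → ℂ) (i : ℕ) : ℂ := ((i : ℂ) + 1) * c (i + 1)

def seriesSum (c : ℕ → ℂ) (z : ℂ) : ℂ := ∑' i, c i * z ^ i

def IsEntireCoeff (c : ℕ → ℂ) : Prop := ∀ r : ℝ, 0 ≤ r → Summable fun i => ‖c i‖ * r ^ i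

lemma seriesSum_zero (c : ℕ → ℂ) : seriesSum c 0 = c 0 := by
  rw [seriesSum, tsum_eq_single 0 fun i hi => by simp [zero_pow hi]]
  simp

namespace IsEntireCoeff

variable {c d : ℕ → ℂ}

lemma summable (hc : IsEntireCoeff c) (z : ℂ) : Summable fun i => c i * z ^ i :=
  .of_norm <| by simpa only [norm_mul, norm_pow] using hc ‖z‖ (norm_nonneg z)

lemma of_norm_le (hd : IsEntireCoeff d) (h : ∀ i, ‖c i‖ ≤ ‖d i‖) : IsEntireCoeff c :=
  fun r hr => (hd r hr).of_nonneg_of_le (fun _ => by positivity)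
    (fun i => mul_le_mul_of_nonneg_right (h i) (by positivity))

lemma natCast_mul (hc : IsEntireCoeff c) : IsEntireCoeff fun i => (i : ℂ) * c i := by
  intro r hr
  refine (hc (2 * r) (by positivity)).of_nonneg_of_le (fun _ => by positivity) fun i => ?_
  have hi : (i : ℝ) ≤ 2 ^ i := by exact_mod_cast Nat.lt_two_pow_self.le
  calc ‖(i : ℂ) * c i‖ * r ^ i = ‖c i‖ * ((i : ℝ) * r ^ i) := by
        rw [norm_mul, Complex.norm_natCast]; ring
    _ ≤ ‖c i‖ * (2 * r) ^ i := by
        rw [mul_pow]; gcongr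

lemma comp_succ (hc : IsEntireCoeff c) : IsEntireCoeff fun i => c (i + 1) := by
  intro r hr
  set R := max r 1
  have hR : 1 ≤ R := le_max_right r 1
  refine ((summable_nat_add_iff 1).mpr (hc R (by positivity))).of_nonneg_of_le
    (fun _ => by positivity) fun i => ?_
  calc ‖c (i + 1)‖ * r ^ i ≤ ‖c (i + 1)‖ * R ^ i := by gcongr; exact le_max_left r 1
    _ ≤ ‖c (i + 1)‖ * R ^ (i + 1) := by gcongr; exact Nat.le_succ i

lemma const_mul (hc : IsEntireCoeff c) (k : ℂ) : IsEntireCoeff fun i => k * c i :=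
  fun r hr => by simpa only [norm_mul, mul_assoc] using (hc r hr).mul_left ‖k‖

lemma derivCoeff (hc : IsEntireCoeff c) : IsEntireCoeff (_root_.derivCoeff c) := by
  have h := hc.natCast_mul.comp_succ
  push_cast at h
  exact h

end IsEntireCoeff

section

variable {c : ℕ → ℂ}

lemma hasDerivAt_seriesSum (hc : IsEntireCoeff c) (z : ℂ) :
    HasDerivAt (seriesSum c) (seriesSum (derivCoeff c) z) z := by
  set R := ‖z‖ + 1
  have hR : 1 ≤ R := by simp [R]
  have bound : ∀ i, ∀ y ∈ Metric.ball (0 : ℂ) R,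
      ‖c i * ((i : ℂ) * y ^ (i - 1))‖ ≤ ‖(i : ℂ) * c i‖ * R ^ i := fun i y hy => by
    have hy : ‖y‖ ≤ R := by simpa using (mem_ball_zero_iff.mp hy).le
    calc ‖c i * ((i : ℂ) * y ^ (i - 1))‖ = ‖(i : ℂ) * c i‖ * ‖y‖ ^ (i - 1) := by
          rw [norm_mul, norm_mul, norm_mul, norm_pow]; ring
      _ ≤ ‖(i : ℂ) * c i‖ * R ^ (i - 1) := by gcongr
      _ ≤ ‖(i : ℂ) * c i‖ * R ^ i := by gcongr; exact Nat.sub_le i 1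
  have key := hasDerivAt_tsum_of_isPreconnected (y₀ := 0) (y := z)
    (hc.natCast_mul R (by positivity)) Metric.isOpen_ball (convex_ball (0 : ℂ) R).isPreconnected
    (fun i y _ => (hasDerivAt_pow i y).const_mul (c i)) bound
    (Metric.mem_ball_self (one_pos.trans_le hR)) (hc.summable 0) (by simp [R])
  have hz : z ∈ Metric.ball (0 : ℂ) R := by simp [R]
  refine key.congr_deriv ?_
  have hs := Summable.of_norm_bounded (hc.natCast_mul R (by positivity)) (bound · z hz)
  rw [hs.tsum_eq_zero_add]
  simp only [CharP.cast_eq_zero, zero_mul, mul_zero, zero_add, Nat.cast_succ,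
    Nat.add_sub_cancel, seriesSum, _root_.derivCoeff]
  exact tsum_congr fun i => by ring

lemma mul_seriesSum_derivCoeff (hc : IsEntireCoeff c) (z : ℂ) :
    z * seriesSum (derivCoeff c) z = seriesSum (fun i => i * c i) z := by
  rw [seriesSum, seriesSum, ← tsum_mul_left, (hc.natCast_mul.summable z).tsum_eq_zero_add]
  simp only [CharP.cast_eq_zero, zero_mul, zero_add, Nat.cast_succ, derivCoeff]
  exact tsum_congr fun i => by ring

lemma seriesSum_const_mul (k : ℂ) (c : ℕ → ℂ) (z : ℂ) :
    seriesSum (fun i => k * c i) z = k * seriesSum c z := by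
  rw [seriesSum, seriesSum, ← tsum_mul_left]
  exact tsum_congr fun i => mul_assoc _ _ _

lemma seriesSum_add {d : ℕ → ℂ} (hc : IsEntireCoeff c) (hd : IsEntireCoeff d) (z : ℂ) :
    seriesSum (fun i => c i + d i) z = seriesSum c z + seriesSum d z := by
  rw [seriesSum, seriesSum, seriesSum, ← (hc.summable z).tsum_add (hd.summable z)]
  exact tsum_congr fun i => add_mul _ _ _

lemma seriesSum_add_mul_seriesSum_derivCoeff (hc : IsEntireCoeff c) (z : ℂ) :
    seriesSum c z + z * seriesSum (derivCoeff c) z = seriesSum (fun i => (i + 1) * c i) z := by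
  rw [mul_seriesSum_derivCoeff hc, seriesSum, seriesSum, seriesSum,
    ← (hc.summable z).tsum_add (hc.natCast_mul.summable z)]
  exact tsum_congr fun i => by ring

end

lemma hasDerivAt_wronskian_eq_zero {F F₁ F₂ G G₁ G₂ : ℂ → ℂ} {k z : ℂ}
    (hF : HasDerivAt F (F₁ z) z) (hF₁ : HasDerivAt F₁ (F₂ z) z)
    (hG : HasDerivAt G (G₁ z) z) (hG₁ : HasDerivAt G₁ (G₂ z) z)
    (odeF : F₁ z + z * F₂ z = k * F z) (odeG : G₁ z + z * G₂ z = k * G z + F₁ z) :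
    HasDerivAt (fun w => F w ^ 2 - 2 * w * (F w * G₁ w - G w * F₁ w)) 0 z := by
  have h := (hF.pow 2).sub (((hasDerivAt_id z).const_mul 2).mul ((hF.mul hG₁).sub (hG.mul hF₁)))
  refine h.congr_deriv ?_
  simp only [Pi.mul_apply, Pi.sub_apply, id_eq, Nat.cast_ofNat, Nat.add_one_sub_one, pow_one]
  linear_combination (2 * G z) * odeF - (2 * F z) * odeG

def f0Coeff (lam : ℂ) (i : ℕ) : ℂ := ((i.factorial : ℂ) ^ 2 * lam ^ (2 * i))⁻¹

def harmCoeff (lam : ℂ) (i : ℕ) : ℂ := harm i * f0Coeff lam i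

lemma norm_harm_le (i : ℕ) : ‖harm i‖ ≤ i := by
  calc ‖harm i‖ ≤ ∑ j ∈ Finset.range i, ‖(1 : ℂ) / (j + 1)‖ := norm_sum_le _ _
    _ ≤ ∑ j ∈ Finset.range i, (1 : ℝ) := Finset.sum_le_sum fun j _ => by
        rw [norm_div, norm_one, ← Nat.cast_succ, Complex.norm_natCast]
        exact div_le_one_of_le₀ (by simp) (by positivity)
    _ = i := by simp

lemma isEntireCoeff_f0Coeff (lam : ℂ) : IsEntireCoeff (f0Coeff lam) := by
  intro r hr
  refine (Real.summable_pow_div_factorial ((‖lam‖ ^ 2)⁻¹ * r)).of_nonneg_of_le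
    (fun _ => by positivity) fun i => ?_
  have hfac : (1 : ℝ) ≤ i.factorial := by exact_mod_cast i.factorial_pos
  calc ‖f0Coeff lam i‖ * r ^ i = ((‖lam‖ ^ 2)⁻¹ * r) ^ i / (i.factorial : ℝ) ^ 2 := by
        simp only [f0Coeff, norm_inv, norm_mul, norm_pow, Complex.norm_natCast]
        rw [pow_mul]; field_simp; rw [div_pow]
    _ ≤ ((‖lam‖ ^ 2)⁻¹ * r) ^ i / i.factorial := by
        gcongr; nlinarith

lemma isEntireCoeff_harmCoeff (lam : ℂ) : IsEntireCoeff (harmCoeff lam) :=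
  (isEntireCoeff_f0Coeff lam).natCast_mul.of_norm_le fun i => by
    rw [harmCoeff, norm_mul, norm_mul, Complex.norm_natCast]
    gcongr
    exact norm_harm_le i

section

variable {lam : ℂ} (hlam : lam ≠ 0)
include hlam

lemma f0Coeff_succ (i : ℕ) :
    ((i : ℂ) + 1) ^ 2 * lam ^ 2 * f0Coeff lam (i + 1) = f0Coeff lam i := by
  have hfac : (i.factorial : ℂ) ≠ 0 := Nat.cast_ne_zero.mpr i.factorial_ne_zero
  rw [f0Coeff, f0Coeff, Nat.factorial_succ, mul_add, pow_add]
  push_cast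
  field_simp

lemma natCast_succ_mul_derivCoeff_f0Coeff (i : ℕ) :
    ((i : ℂ) + 1) * derivCoeff (f0Coeff lam) i = (lam ^ 2)⁻¹ * f0Coeff lam i := by
  rw [← f0Coeff_succ hlam, derivCoeff]
  field_simp

lemma natCast_succ_mul_derivCoeff_harmCoeff (i : ℕ) :
    ((i : ℂ) + 1) * derivCoeff (harmCoeff lam) i
      = (lam ^ 2)⁻¹ * harmCoeff lam i + derivCoeff (f0Coeff lam) i := by
  have hi : (i : ℂ) + 1 ≠ 0 := by exact_mod_cast i.succ_ne_zero
  have hs := f0Coeff_succ hlam i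
  rw [derivCoeff, derivCoeff, harmCoeff, harmCoeff, harm, Finset.sum_range_succ, ← harm]
  field_simp
  linear_combination harm i * hs

lemma ode_f0Coeff (z : ℂ) :
    seriesSum (derivCoeff (f0Coeff lam)) z
        + z * seriesSum (derivCoeff (derivCoeff (f0Coeff lam))) z
      = (lam ^ 2)⁻¹ * seriesSum (f0Coeff lam) z := by
  rw [seriesSum_add_mul_seriesSum_derivCoeff (isEntireCoeff_f0Coeff lam).derivCoeff,
    ← seriesSum_const_mul]
  simp_rw [natCast_succ_mul_derivCoeff_f0Coeff hlam]

lemma ode_harmCoeff (z : ℂ) :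
    seriesSum (derivCoeff (harmCoeff lam)) z
        + z * seriesSum (derivCoeff (derivCoeff (harmCoeff lam))) z
      = (lam ^ 2)⁻¹ * seriesSum (harmCoeff lam) z + seriesSum (derivCoeff (f0Coeff lam)) z := by
  rw [seriesSum_add_mul_seriesSum_derivCoeff (isEntireCoeff_harmCoeff lam).derivCoeff,
    ← seriesSum_const_mul, ← seriesSum_add ((isEntireCoeff_harmCoeff lam).const_mul _)
      (isEntireCoeff_f0Coeff lam).derivCoeff]
  simp_rw [natCast_succ_mul_derivCoeff_harmCoeff hlam]

lemma wronskian_eq_one (z : ℂ) :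
    seriesSum (f0Coeff lam) z ^ 2
      - 2 * z * (seriesSum (f0Coeff lam) z * seriesSum (derivCoeff (harmCoeff lam)) z
        - seriesSum (harmCoeff lam) z * seriesSum (derivCoeff (f0Coeff lam)) z) = 1 := by
  have ha := isEntireCoeff_f0Coeff lam
  have hb := isEntireCoeff_harmCoeff lam
  have hW := fun w => hasDerivAt_wronskian_eq_zero (hasDerivAt_seriesSum ha w)
    (hasDerivAt_seriesSum ha.derivCoeff w) (hasDerivAt_seriesSum hb w)
    (hasDerivAt_seriesSum hb.derivCoeff w) (ode_f0Coeff hlam w) (ode_harmCoeff hlam w)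
  rw [is_const_of_deriv_eq_zero (fun w => (hW w).differentiableAt) (fun w => (hW w).deriv) z 0]
  simp [seriesSum_zero, f0Coeff]

end

lemma f0_eq_seriesSum (lam : ℂ) : f0 lam = seriesSum (f0Coeff lam) :=
  funext fun z => tsum_congr fun i => by rw [f0Coeff, div_eq_inv_mul]

lemma f1_eq_seriesSum (lam : ℂ) : f1 lam = fun z => -(2 / lam) * seriesSum (harmCoeff lam) z :=
  funext fun z => by
    rw [f1, seriesSum]
    congr 1
    exact tsum_congr fun i => by
      rw [harmCoeff, f0Coeff, mul_div_assoc, div_eq_inv_mul, mul_assoc]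

theorem det_L0_eq_one (lam : ℂ) (hlam : lam ≠ 0) :
    ∀ z : ℂ,
      f0 lam z * (f0 lam z + lam * z * deriv (f1 lam) z)
        - f1 lam z * (lam * z * deriv (f0 lam) z) = 1 ∧
      (L0 lam z).det = 1 := by
  intro z
  have hd0 : deriv (f0 lam) z = seriesSum (derivCoeff (f0Coeff lam)) z := by
    rw [f0_eq_seriesSum]
    exact (hasDerivAt_seriesSum (isEntireCoeff_f0Coeff lam) z).deriv
  have hd1 : deriv (f1 lam) z = -(2 / lam) * seriesSum (derivCoeff (harmCoeff lam)) z := by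
    rw [f1_eq_seriesSum]
    exact ((hasDerivAt_seriesSum (isEntireCoeff_harmCoeff lam) z).const_mul _).deriv
  have hdet : f0 lam z * (f0 lam z + lam * z * deriv (f1 lam) z)
      - f1 lam z * (lam * z * deriv (f0 lam) z) = 1 := by
    rw [hd0, hd1, f0_eq_seriesSum, f1_eq_seriesSum, ← wronskian_eq_one hlam z]
    field_simp
    ring
  exact ⟨hdet, by rw [L0, det_fin_two_of]; linear_combination hdet⟩
end
end

section
/- Let u : (0,∞) → ℝ be twice continuously differentiable and suppose (1/4)·(u''(r) + u'(r)/r) − (1/4)·e^{2u(r)} + (4/r²)·e^{−2u(r)} = 0 for all r > 0 (this is the radially reduced Gauss equation with mean curvature H = 1/2 and Hopf differential coefficient Q = 2/(zH)). Define w(x) = u(x²/16) − log 2 + (1/2)·log(x²/16) for x > 0. Then w''(x) + w'(x)/x = 2·sinh(2·w(x)) for all x > 0 (the radial sinh-Gordon equation). -/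
/-!
With `r = x² / 16` one has `w x = U r` for `U r = u r - log 2 + (1/2) log r`. The substitution
`r = c x²` multiplies the radial Laplacian by `4 c r`, here `r / 4`; the term `(1/2) log r` is
radially harmonic; and `e^{2U} = (r/4) e^{2u}`. So the Gauss equation multiplied by `r / 4` reads
`Δ w = e^{2w} - e^{-2w} = 2 sinh (2 w)`.
-/

open Real Filter Topology Set

theorem ContDiffAt.differentiableAt_deriv {𝕜 F : Type*} [NontriviallyNormedField 𝕜]
    [NormedAddCommGroup F] [NormedSpace 𝕜 F] {f : 𝕜 → F} {x : 𝕜} (hf : ContDiffAt 𝕜 2 f x) :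
    DifferentiableAt 𝕜 (deriv f) x := by
  obtain ⟨s, hs, hxs, hfs⟩ := hf.contDiffWithinAt.contDiffOn' (s := univ) le_rfl (by simp)
  rw [insert_eq_of_mem (mem_univ x), univ_inter] at hfs
  exact ((hfs.deriv_of_isOpen hs le_rfl).differentiableOn one_ne_zero).differentiableAt
    (hs.mem_nhds hxs)

/-- The Laplacian of `z ↦ f ‖z‖` on the plane, at a point of modulus `r`. -/
noncomputable def radialLaplacian (f : ℝ → ℝ) (r : ℝ) : ℝ :=
  deriv (deriv f) r + deriv f r / r

@[simp]
theorem radialLaplacian_sub_const (f : ℝ → ℝ) (a : ℝ) :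
    radialLaplacian (fun y => f y - a) = radialLaplacian f := by
  funext r
  rw [radialLaplacian, radialLaplacian, deriv_sub_const_fun]

theorem radialLaplacian_comp_const_mul_sq {f : ℝ → ℝ} {c x : ℝ} (hx : x ≠ 0)
    (hf : ContDiffAt ℝ 2 f (c * x ^ 2)) :
    radialLaplacian (fun y => f (c * y ^ 2)) x =
      4 * c * (c * x ^ 2) * radialLaplacian f (c * x ^ 2) := by
  have hsq (y : ℝ) : HasDerivAt (fun y => c * y ^ 2) (2 * c * y) y := by
    simpa [mul_comm, mul_left_comm, mul_assoc] using (hasDerivAt_pow 2 y).const_mul c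
  have hderiv :
      deriv (fun y => f (c * y ^ 2)) =ᶠ[𝓝 x] fun y => deriv f (c * y ^ 2) * (2 * c * y) := by
    filter_upwards [(hsq x).continuousAt.tendsto.eventually (hf.eventually (by simp))] with y hy
    exact ((hy.differentiableAt two_ne_zero).hasDerivAt.comp y (hsq y)).deriv
  have hderiv2 : HasDerivAt (fun y => deriv f (c * y ^ 2) * (2 * c * y))
      (deriv (deriv f) (c * x ^ 2) * (2 * c * x) * (2 * c * x)
        + deriv f (c * x ^ 2) * (2 * c)) x := by
    have hlin : HasDerivAt (fun y => 2 * c * y) (2 * c) x := by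
      simpa using (hasDerivAt_id x).const_mul (2 * c)
    exact (hf.differentiableAt_deriv.hasDerivAt.comp x (hsq x)).fun_mul hlin
  rw [radialLaplacian, radialLaplacian, hderiv.deriv_eq, hderiv2.deriv, hderiv.self_of_nhds]
  rcases eq_or_ne c 0 with rfl | hc
  · simp
  · field_simp
    ring

theorem radialLaplacian_add_mul_log {f : ℝ → ℝ} {b r : ℝ} (hr : r ≠ 0)
    (hf : ContDiffAt ℝ 2 f r) :
    radialLaplacian (fun y => f y + b * log y) r = radialLaplacian f r := by
  have hderiv : deriv (fun y => f y + b * log y) =ᶠ[𝓝 r] fun y => deriv f y + b * y⁻¹ := by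
    filter_upwards [hf.eventually (by simp), eventually_ne_nhds hr] with y hfy hy
    exact ((hfy.differentiableAt two_ne_zero).hasDerivAt.add
      ((hasDerivAt_log hy).const_mul b)).deriv
  have hderiv2 : HasDerivAt (fun y => deriv f y + b * y⁻¹)
      (deriv (deriv f) r + b * -(r ^ 2)⁻¹) r :=
    hf.differentiableAt_deriv.hasDerivAt.add ((hasDerivAt_inv hr).const_mul b)
  rw [radialLaplacian, radialLaplacian, hderiv.deriv_eq, hderiv2.deriv, hderiv.self_of_nhds]
  field_simp
  ring

theorem exp_two_mul_sub_log_two_add_half_log (v : ℝ) {r : ℝ} (hr : 0 < r) :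
    exp (2 * (v - log 2 + 1 / 2 * log r)) = r / 4 * exp (2 * v) := by
  have hexp : 2 * (v - log 2 + 1 / 2 * log r) = 2 * v + (log r - log (2 ^ 2)) := by
    rw [log_pow]
    ring
  rw [hexp, exp_add, ← log_div hr.ne' (by norm_num), exp_log (by positivity)]
  ring

theorem radial_gauss_to_sinh_gordon (u : ℝ → ℝ)
    (hu : ContDiffOn ℝ 2 u (Set.Ioi 0))
    (heq : ∀ r : ℝ, 0 < r →
      (1 / 4) * (deriv (deriv u) r + deriv u r / r)
        - (1 / 4) * Real.exp (2 * u r) + (4 / r ^ 2) * Real.exp (-(2 * u r)) = 0)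
    (w : ℝ → ℝ)
    (hw : ∀ x : ℝ, w x = u (x ^ 2 / 16) - Real.log 2 + (1 / 2) * Real.log (x ^ 2 / 16)) :
    ∀ x : ℝ, 0 < x →
      deriv (deriv w) x + deriv w x / x = 2 * Real.sinh (2 * w x) := by
  have hΔu (r : ℝ) (hr : 0 < r) :
      radialLaplacian u r = exp (2 * u r) - 16 / r ^ 2 * exp (-(2 * u r)) := by
    rw [radialLaplacian]
    linear_combination 4 * heq r hr
  have hw' : w = fun x => u (16⁻¹ * x ^ 2) - log 2 + 1 / 2 * log (16⁻¹ * x ^ 2) :=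
    funext fun x => by rw [hw, div_eq_inv_mul]
  intro x hx
  have hr : 0 < 16⁻¹ * x ^ 2 := by positivity
  have hu₀ : ContDiffAt ℝ 2 (fun y => u y - log 2) (16⁻¹ * x ^ 2) :=
    (hu.contDiffAt (Ioi_mem_nhds hr)).sub contDiffAt_const
  change radialLaplacian w x = _
  rw [hw', radialLaplacian_comp_const_mul_sq hx.ne'
      (hu₀.add (contDiffAt_const.mul (contDiffAt_log.2 hr.ne'))),
    radialLaplacian_add_mul_log hr.ne' hu₀, radialLaplacian_sub_const, sinh_eq, exp_neg,
    exp_two_mul_sub_log_two_add_half_log _ hr, hΔu _ hr, exp_neg]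
  field_simp
  ring
end
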